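/- arXiv:2009.06794 — 5 statements merged into one kernel-verified Lean document; each statement's English description precedes it below -/
import Mathlib

section
/- Let X, Y and Z be metric spaces, and let f : X → Y and g : Y → Z be coarse quotient maps. Then g∘f : X → Z is a coarse quotient map. -/
noncomputable section
open scoped ENNReal
open Metric Set

/-- A map between (pseudo)metric spaces is *coarse* if points at distance at most `t`
are mapped to points at uniformly bounded distance. -/
def CoarseMap {X Y : Type*} [PseudoMetricSpace X] [PseudoMetricSpace Y] (f : X → Y) : Prop :=
  ∀ t : ℝ, 0 ≤ t → ∃ C : ℝ, ∀ x y : X, dist x y ≤ t → dist (f x) (f y) ≤ C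

/-- Two maps are *close* if they are at uniformly bounded distance. -/
def Close {X Y : Type*} [PseudoMetricSpace Y] (f g : X → Y) : Prop :=
  ∃ m : ℝ, ∀ x : X, dist (f x) (g x) ≤ m

/-- `f` is `K`-co-coarse: for all `ε > 0` there is `δ > 0` with
`B(f x, ε) ⊆ (f (B(x, δ)))^K` for all `x`. -/
def CoCoarseWith {X Y : Type*} [PseudoMetricSpace X] [PseudoMetricSpace Y]
    (K : ℝ) (f : X → Y) : Prop :=
  ∀ ε > (0:ℝ), ∃ δ > (0:ℝ), ∀ x : X, ∀ y ∈ closedBall (f x) ε,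
    ∃ x' ∈ closedBall x δ, dist y (f x') ≤ K

/-- `f` is co-coarse if it is `K`-co-coarse for some `K > 0`. -/
def CoCoarse {X Y : Type*} [PseudoMetricSpace X] [PseudoMetricSpace Y] (f : X → Y) : Prop :=
  ∃ K > (0:ℝ), CoCoarseWith K f

/-- A *coarse quotient map* is a coarse co-coarse map. -/
def CoarseQuotient {X Y : Type*} [PseudoMetricSpace X] [PseudoMetricSpace Y] (f : X → Y) : Prop :=
  CoarseMap f ∧ CoCoarse f

/-- A *coarse equivalence*. -/
def CoarseEquiv {X Y : Type*} [PseudoMetricSpace X] [PseudoMetricSpace Y] (f : X → Y) : Prop :=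
  CoarseMap f ∧ ∃ h : Y → X, CoarseMap h ∧ Close (f ∘ h) id ∧ Close (h ∘ f) id

/-- Uniformly locally finite metric space. -/
def ULF (X : Type*) [PseudoMetricSpace X] : Prop :=
  ∀ r > (0:ℝ), ∃ N : ℕ, ∀ x : X, (closedBall x r).Finite ∧ (closedBall x r).ncard ≤ N

/-- Uniformly finite-to-one map. -/
def UnifFiniteToOne {X Y : Type*} (f : X → Y) : Prop :=
  ∃ N : ℕ, ∀ y : Y, (f ⁻¹' {y}).Finite ∧ (f ⁻¹' {y}).ncard ≤ N

/-- `f` is coarsely `n`-to-1. -/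
def CoarselyNTo1 {X Y : Type*} [PseudoMetricSpace X] [PseudoMetricSpace Y]
    (n : ℕ) (f : X → Y) : Prop :=
  ∀ s > (0:ℝ), ∃ r > (0:ℝ), ∀ B : Set Y, EMetric.diam B ≤ ENNReal.ofReal s →
    ∃ A : Fin n → Set X, (∀ i, EMetric.diam (A i) ≤ ENNReal.ofReal r) ∧ f ⁻¹' B ⊆ ⋃ i, A i

/-- The composition of coarse quotient maps is a coarse quotient map. -/
theorem coarseQuotient_comp {X Y Z : Type*} [MetricSpace X] [MetricSpace Y] [MetricSpace Z]
    (f : X → Y) (g : Y → Z) (hf : CoarseQuotient f) (hg : CoarseQuotient g) :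
    CoarseQuotient (g ∘ f) := by
  obtain ⟨hfc, Kf, hKf, hfco⟩ := hf
  obtain ⟨hgc, Kg, hKg, hgco⟩ := hg
  constructor
  · -- coarse
    intro t ht
    obtain ⟨C, hC⟩ := hfc t ht
    obtain ⟨C', hC'⟩ := hgc (max C 0) (le_max_right _ _)
    exact ⟨C', fun x y hxy => hC' _ _ (le_trans (hC x y hxy) (le_max_left _ _))⟩
  · -- co-coarse
    obtain ⟨C, hC⟩ := hgc (max Kf 0) (le_max_right _ _)
    refine ⟨Kg + max C 0 + 1, by positivity, fun ε hε => ?_⟩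
    obtain ⟨δg, hδg, hg'⟩ := hgco ε hε
    obtain ⟨δf, hδf, hf'⟩ := hfco δg hδg
    refine ⟨δf, hδf, fun x z hz => ?_⟩
    obtain ⟨y, hy, hyK⟩ := hg' (f x) z hz
    obtain ⟨x', hx', hx'K⟩ := hf' x y hy
    refine ⟨x', hx', ?_⟩
    have h1 : dist (g y) (g (f x')) ≤ max C 0 := by
      refine le_trans (le_max_of_le_left (hC y (f x') ?_)) le_rfl
      exact le_trans hx'K (le_max_left _ _)
    calc dist z ((g ∘ f) x') ≤ dist z (g y) + dist (g y) (g (f x')) := dist_triangle _ _ _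
      _ ≤ Kg + max C 0 := add_le_add hyK h1
      _ ≤ Kg + max C 0 + 1 := by linarith
end
end

section
/- Let X and Y be metric spaces, f,g : X → Y be close maps, and n ∈ ℕ. If f is coarsely n-to-1, then g is coarsely n-to-1. -/
noncomputable section
open scoped ENNReal
open Metric Set

/-- Being coarsely `n`-to-1 is preserved under closeness of maps. -/
theorem coarselyNTo1_of_close {X Y : Type*} [MetricSpace X] [MetricSpace Y]
    (f g : X → Y) (hclose : Close f g) (n : ℕ) (hf : CoarselyNTo1 n f) :
    CoarselyNTo1 n g := by
  obtain ⟨m, hm⟩ := hclose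
  set m' : ℝ := max m 0 with hm'def
  have hm'0 : 0 ≤ m' := le_max_right _ _
  have hm' : ∀ x, dist (f x) (g x) ≤ m' := fun x => (hm x).trans (le_max_left _ _)
  intro s hs
  have hs' : s + 2 * m' > 0 := by linarith
  obtain ⟨r, hr, hA⟩ := hf (s + 2 * m') hs'
  refine ⟨r, hr, fun B hB => ?_⟩
  set B' : Set Y := ⋃ b ∈ B, closedBall b m' with hB'def
  have hdiam : EMetric.diam B' ≤ ENNReal.ofReal (s + 2 * m') := by
    apply EMetric.diam_le
    rintro y1 hy1 y2 hy2
    simp only [hB'def, mem_iUnion, exists_prop] at hy1 hy2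
    obtain ⟨b1, hb1, hy1⟩ := hy1
    obtain ⟨b2, hb2, hy2⟩ := hy2
    calc edist y1 y2 ≤ edist y1 b1 + edist b1 b2 + edist b2 y2 := edist_triangle4 _ _ _ _
      _ ≤ ENNReal.ofReal m' + ENNReal.ofReal s + ENNReal.ofReal m' := by
          gcongr
          · rw [edist_dist]; exact ENNReal.ofReal_le_ofReal (mem_closedBall.mp hy1)
          · exact (EMetric.edist_le_diam_of_mem hb1 hb2).trans hB
          · rw [edist_dist, dist_comm]; exact ENNReal.ofReal_le_ofReal (mem_closedBall.mp hy2)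
      _ = ENNReal.ofReal (s + 2 * m') := by
          rw [← ENNReal.ofReal_add hm'0 hs.le, ← ENNReal.ofReal_add (by linarith) hm'0]
          ring_nf
  obtain ⟨A, hAd, hAcov⟩ := hA B' hdiam
  refine ⟨A, hAd, fun x hx => ?_⟩
  apply hAcov
  simp only [hB'def, mem_preimage, mem_iUnion, exists_prop]
  exact ⟨g x, hx, mem_closedBall.mpr (hm' x)⟩
end
end

section
/- Let X be a metric space, Y be a uniformly locally finite metric space, and f : X → Y be an injective coarse quotient map. Then f is uniformly coarsely finite-to-one, i.e., coarsely n-to-1 for some n ∈ ℕ. -/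
noncomputable section
open scoped ENNReal
open Metric Set

lemma exists_fin_range_cover {X : Type*} {F : Set X} {N : ℕ} (hfin : F.Finite)
    (hcard : F.ncard ≤ N) (hne : F.Nonempty) : ∃ g : Fin N → X, F ⊆ Set.range g := by
  obtain ⟨x0, hx0⟩ := hne
  have : Fintype F := hfin.fintype
  have hcardeq : Fintype.card F = F.ncard := by
    rw [Set.ncard_eq_toFinset_card']
    simp [Set.toFinset_card]
  let e : F ≃ Fin (Fintype.card F) := Fintype.equivFin F
  refine ⟨fun i => if h : (i : ℕ) < Fintype.card F then (e.symm ⟨i, h⟩ : X) else x0, ?_⟩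
  intro x hx
  have hlt : ((e ⟨x, hx⟩ : Fin (Fintype.card F)) : ℕ) < Fintype.card F := (e ⟨x, hx⟩).isLt
  have hltN : ((e ⟨x, hx⟩ : Fin (Fintype.card F)) : ℕ) < N :=
    lt_of_lt_of_le hlt (hcardeq ▸ hcard)
  refine ⟨⟨(e ⟨x, hx⟩ : Fin (Fintype.card F)), hltN⟩, ?_⟩
  simp only [hlt, dif_pos]
  have : e.symm ⟨((e ⟨x, hx⟩ : Fin (Fintype.card F)) : ℕ), hlt⟩ = ⟨x, hx⟩ := by
    simp [Fin.eta]
  rw [this]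

/-- An injective coarse quotient map into a uniformly locally finite
metric space is coarsely `n`-to-1 for some `n`. -/
theorem injective_coarseQuotient_uniformly_coarsely_finiteToOne
    {X Y : Type*} [MetricSpace X] [MetricSpace Y] (hY : ULF Y)
    (f : X → Y) (hinj : Function.Injective f) (hf : CoarseQuotient f) :
    ∃ n : ℕ, CoarselyNTo1 n f := by
  obtain ⟨hcoarse, K, hK, hcc⟩ := hf
  obtain ⟨N, hN⟩ := hY K hK
  refine ⟨N, ?_⟩
  intro s hs
  obtain ⟨δ, hδ, hδspec⟩ := hcc s hs
  refine ⟨2*δ + 1, by positivity, ?_⟩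
  intro B hB
  by_cases hne : (f ⁻¹' B).Nonempty
  · obtain ⟨x0, hx0⟩ := hne
    set F := f ⁻¹' (closedBall (f x0) K) with hF
    have hx0F : x0 ∈ F := by simp [hF, hK.le]
    have hFfin : F.Finite := (hN (f x0)).1.preimage hinj.injOn
    have hFcard : F.ncard ≤ N := by
      have h1 : F.ncard = (f '' F).ncard := (Set.ncard_image_of_injective F hinj).symm
      have h2 : f '' F ⊆ closedBall (f x0) K := Set.image_preimage_subset f _
      exact h1 ▸ (Set.ncard_le_ncard h2 (hN (f x0)).1).trans (hN (f x0)).2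
    obtain ⟨g, hg⟩ := exists_fin_range_cover hFfin hFcard ⟨x0, hx0F⟩
    refine ⟨fun i => closedBall (g i) δ, ?_, ?_⟩
    · intro i
      apply EMetric.diam_le
      intro x hx y hy
      rw [edist_dist]
      apply ENNReal.ofReal_le_ofReal
      calc dist x y ≤ dist x (g i) + dist (g i) y := dist_triangle _ _ _
        _ ≤ δ + δ := add_le_add hx (dist_comm (g i) y ▸ hy)
        _ ≤ 2*δ + 1 := by linarith
    · intro x hx
      have hedist : edist (f x0) (f x) ≤ ENNReal.ofReal s :=
        le_trans (EMetric.edist_le_diam_of_mem hx0 hx) hB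
      have hdist : f x0 ∈ closedBall (f x) s := by
        rw [Metric.mem_closedBall, dist_edist]
        exact ENNReal.toReal_le_of_le_ofReal hs.le hedist
      obtain ⟨x', hx', hKx'⟩ := hδspec x (f x0) hdist
      have hx'F : x' ∈ F := by
        simp only [hF, Set.mem_preimage, Metric.mem_closedBall]
        rw [dist_comm]; exact hKx'
      obtain ⟨i, hi⟩ := hg hx'F
      refine Set.mem_iUnion.2 ⟨i, ?_⟩
      rw [Metric.mem_closedBall, hi]
      exact dist_comm x' x ▸ (Metric.mem_closedBall.1 hx')
  · exact ⟨fun _ => ∅, fun i => by exact Metric.ediam_empty.le.trans zero_le, fun x hx => absurd ⟨x, hx⟩ hne⟩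
end
end

section
/- Let X and Y be metric spaces with Y uniformly locally finite, and let f : X → Y be a uniformly finite-to-one map. Then there exist a uniformly locally finite metric space Z, an isometric embedding i : Y → Z which is a coarse equivalence onto Z, and an injective map g : X → Z which is close to i∘f. -/
noncomputable section
open scoped ENNReal
open Metric Set

private lemma fiber_cast_aux {X Y γ : Type*} (f : X → Y) (E : ∀ y, ↥(f ⁻¹' {y}) → γ)
    {y y' : Y} (h : y = y') (x : X) (hx : x ∈ f ⁻¹' {y'}) :
    E y' ⟨x, hx⟩ = E y ⟨x, by rw [h]; exact hx⟩ := by subst h; rfl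

/-- A copy of a set of naturals with no pre-existing metric instance. -/
private def MetricCopy (s : Set ℕ) : Type := s

private def MetricCopy.equiv (s : Set ℕ) : MetricCopy s ≃ ↥s := Equiv.refl ↥s

/-- A uniformly finite-to-one map into a u.l.f. metric space can be replaced,
after enlarging the codomain by a coarse equivalence, by a close injective map. -/
theorem unifFiniteToOne_close_to_injective
    {X Y : Type*} [MetricSpace X] [MetricSpace Y] (hY : ULF Y)
    (f : X → Y) (hf : UnifFiniteToOne f) :
    ∃ (Z : Type) (mZ : MetricSpace Z),
      @ULF Z mZ.toPseudoMetricSpace ∧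
      ∃ i : Y → Z,
        (@Isometry Y Z _ mZ.toPseudoMetricSpace.toPseudoEMetricSpace i) ∧
        (@CoarseEquiv Y Z _ mZ.toPseudoMetricSpace i) ∧
        ∃ g : X → Z, Function.Injective g ∧ @Close X Z mZ.toPseudoMetricSpace g (i ∘ f) := by
  classical
  obtain ⟨N, hN⟩ := hf
  -- Y is countable
  have hYc : Countable Y := by
    rcases isEmpty_or_nonempty Y with h | ⟨⟨y0⟩⟩
    · infer_instance
    · have huniv : (Set.univ : Set Y) = ⋃ n : ℕ, closedBall y0 (n + 1) := by
        ext y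
        simp only [mem_univ, true_iff, mem_iUnion, mem_closedBall]
        obtain ⟨n, hn⟩ := exists_nat_ge (dist y y0)
        exact ⟨n, hn.trans (by linarith)⟩
      have hcu : (Set.univ : Set Y).Countable := by
        rw [huniv]
        refine countable_iUnion fun n => ?_
        obtain ⟨M, hM⟩ := hY (n + 1) (by positivity)
        exact (hM y0).1.countable
      exact Set.countable_univ_iff.mp hcu
  obtain ⟨ι, hι⟩ := Countable.exists_injective_nat Y
  set Y₀ : Type := MetricCopy (Set.range ι) with hY₀
  let e : Y ≃ Y₀ := (Equiv.ofInjective ι hι).trans (MetricCopy.equiv _).symm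
  letI mY₀ : MetricSpace Y₀ := MetricSpace.induced e.symm e.symm.injective inferInstance
  letI mF : MetricSpace (Fin (N + 1)) :=
    MetricSpace.induced (fun k => ((k : ℕ) : ℝ))
      (fun a b h => Fin.val_injective (Nat.cast_injective h)) inferInstance
  have dE : ∀ a b : Y₀, dist a b = dist (e.symm a) (e.symm b) := fun _ _ => rfl
  have dEe : ∀ y y' : Y, dist (e y) (e y') = dist y y' := by
    intro y y'; rw [dE]; simp
  have dF : ∀ k k' : Fin (N + 1), dist k k' ≤ (N : ℝ) := by
    intro k k'
    have h1 : ((k : ℕ) : ℝ) ≤ N := by exact_mod_cast Nat.le_of_lt_succ k.isLt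
    have h2 : ((k' : ℕ) : ℝ) ≤ N := by exact_mod_cast Nat.le_of_lt_succ k'.isLt
    have h3 : (0:ℝ) ≤ ((k : ℕ) : ℝ) := by positivity
    have h4 : (0:ℝ) ≤ ((k' : ℕ) : ℝ) := by positivity
    have hd : dist k k' = |((k : ℕ) : ℝ) - ((k' : ℕ) : ℝ)| := rfl
    rw [hd, abs_sub_le_iff]
    constructor <;> linarith
  have dZ : ∀ z w : Y₀ × Fin (N + 1), dist z w = max (dist z.1 w.1) (dist z.2 w.2) :=
    fun _ _ => rfl
  refine ⟨Y₀ × Fin (N + 1), inferInstance, ?_, fun y => (e y, 0), ?_, ?_, ?_⟩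
  · -- ULF
    intro r hr
    obtain ⟨M, hM⟩ := hY r hr
    refine ⟨M * (N + 1), ?_⟩
    rintro ⟨a, k⟩
    have hball : closedBall a r = e '' closedBall (e.symm a) r := by
      rw [Equiv.image_eq_preimage_symm]
      ext b
      exact Iff.rfl
    have hsf : (closedBall a r).Finite := by
      rw [hball]; exact ((hM (e.symm a)).1).image _
    have htf : (closedBall k r).Finite := Set.toFinite _
    have hprod : closedBall ((a, k) : Y₀ × Fin (N + 1)) r
        = closedBall a r ×ˢ closedBall k r := by
      ext ⟨b, l⟩
      simp only [mem_closedBall, Set.mem_prod, dZ, max_le_iff]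
    constructor
    · rw [hprod]; exact hsf.prod htf
    · rw [hprod]
      have h1 : (closedBall a r ×ˢ closedBall k r).ncard
          = (closedBall a r).ncard * (closedBall k r).ncard := by
        rw [← Nat.card_coe_set_eq, ← Nat.card_coe_set_eq, ← Nat.card_coe_set_eq,
          Nat.card_congr (Equiv.Set.prod _ _), Nat.card_prod]
      rw [h1]
      have hs : (closedBall a r).ncard ≤ M := by
        rw [hball, Set.ncard_image_of_injective _ e.injective]
        exact (hM (e.symm a)).2
      have ht : (closedBall k r).ncard ≤ N + 1 := by
        have h2 := Set.ncard_le_ncard (subset_univ (closedBall k r)) finite_univ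
        rwa [Set.ncard_univ, Nat.card_eq_fintype_card, Fintype.card_fin] at h2
      exact Nat.mul_le_mul hs ht
  · -- Isometry
    refine Isometry.of_dist_eq fun y y' => ?_
    rw [dZ]
    dsimp only
    rw [dEe, dist_self]
    exact max_eq_left dist_nonneg
  · -- CoarseEquiv
    refine ⟨fun t ht => ⟨t, fun y y' h => ?_⟩, fun z => e.symm z.1,
      fun t ht => ⟨t, fun z w hzw => ?_⟩, ⟨N, ?_⟩, ⟨0, ?_⟩⟩
    · rw [dZ]
      dsimp only
      rw [dEe, dist_self]
      exact max_le h ht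
    · rw [← dE]
      refine le_trans ?_ hzw
      rw [dZ]
      exact le_max_left _ _
    · rintro ⟨a, k⟩
      simp only [Function.comp_apply, id_eq]
      rw [dZ]
      dsimp only
      rw [Equiv.apply_symm_apply, dist_self]
      exact max_le (Nat.cast_nonneg N) (dF 0 k)
    · intro y
      simp only [Function.comp_apply, id_eq]
      rw [Equiv.symm_apply_apply, dist_self]
  · -- injective map g
    have hE : ∀ y : Y, ∃ E : ↥(f ⁻¹' {y}) → Fin (N + 1), Function.Injective E := by
      intro y
      have hfin := (hN y).1
      haveI := hfin.fintype
      have hcard : Fintype.card ↥(f ⁻¹' {y}) ≤ N + 1 := by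
        rw [← Nat.card_eq_fintype_card, Nat.card_coe_set_eq]
        exact (hN y).2.trans (Nat.le_succ N)
      exact ⟨fun p => Fin.castLE hcard (Fintype.equivFin _ p),
        fun a b h => (Fintype.equivFin _).injective (Fin.castLE_injective _ h)⟩
    choose E hEinj using hE
    refine ⟨fun x => (e (f x), E (f x) ⟨x, rfl⟩), ?_, ⟨N, ?_⟩⟩
    · intro a b h
      simp only [Prod.mk.injEq] at h
      obtain ⟨h1, h2⟩ := h
      have hfab : f a = f b := e.injective h1
      have h3 : E (f b) ⟨b, rfl⟩ = E (f a) ⟨b, by rw [hfab]; rfl⟩ :=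
        fiber_cast_aux f E hfab b rfl
      rw [h3] at h2
      have h4 := hEinj (f a) h2
      exact congrArg Subtype.val h4
    · intro x
      simp only [Function.comp_apply]
      rw [dZ]
      dsimp only
      rw [dist_self]
      exact max_le (Nat.cast_nonneg N) (dF _ _)
end
end

section
/- Let X be a metric space and Y be a uniformly locally finite metric space. Then any uniformly finite-to-one coarse quotient map f : X → Y is uniformly coarsely finite-to-one, i.e., coarsely n-to-1 for some n ∈ ℕ. -/
noncomputable section
open scoped ENNReal
open Metric Set

lemma exists_range_cover {α : Type*} (a₀ : α) {s : Set α} (hs : s.Finite) {n : ℕ}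
    (h : s.ncard ≤ n) : ∃ g : Fin n → α, s ⊆ Set.range g := by
  classical
  have hF : hs.toFinset.card ≤ n := by
    rwa [Set.ncard_eq_toFinset_card _ hs] at h
  refine ⟨fun i => if h' : (i : ℕ) < hs.toFinset.card then
      (hs.toFinset.equivFin.symm ⟨i, h'⟩ : α) else a₀, ?_⟩
  intro x hx
  have hxF : x ∈ hs.toFinset := hs.mem_toFinset.mpr hx
  refine ⟨⟨hs.toFinset.equivFin ⟨x, hxF⟩,
    lt_of_lt_of_le (hs.toFinset.equivFin ⟨x, hxF⟩).2 hF⟩, ?_⟩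
  simp

/-- A uniformly finite-to-one coarse quotient map into a uniformly locally
finite metric space is coarsely `n`-to-1 for some `n`. -/
theorem unifFiniteToOne_coarseQuotient_uniformly_coarsely_finiteToOne
    {X Y : Type*} [MetricSpace X] [MetricSpace Y] (hY : ULF Y)
    (f : X → Y) (hfin : UnifFiniteToOne f) (hf : CoarseQuotient f) :
    ∃ n : ℕ, CoarselyNTo1 n f := by
  classical
  obtain ⟨N, hN⟩ := hfin
  obtain ⟨K, hK0, hK⟩ := hf.2
  obtain ⟨M, hM⟩ := hY K hK0
  refine ⟨M * N + 1, ?_⟩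
  intro s hs
  obtain ⟨δ, hδ0, hδ⟩ := hK s hs
  refine ⟨2 * δ, by linarith, ?_⟩
  intro B hB
  rcases (f ⁻¹' B).eq_empty_or_nonempty with hEmp | ⟨x₀, hx₀⟩
  · exact ⟨fun _ => ∅, fun i => by simp [EMetric.diam], by simp [hEmp]⟩
  · set y₀ := f x₀ with hy₀
    have hz : ∀ x ∈ f ⁻¹' B, ∃ x', dist x x' ≤ δ ∧ f x' ∈ closedBall y₀ K := by
      intro x hx
      have hd : dist y₀ (f x) ≤ s := by
        have h1 : edist y₀ (f x) ≤ EMetric.diam B := EMetric.edist_le_diam_of_mem hx₀ hx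
        have h2 : edist y₀ (f x) ≤ ENNReal.ofReal s := h1.trans hB
        rw [edist_dist] at h2
        exact (ENNReal.ofReal_le_ofReal_iff hs.le).mp h2
      obtain ⟨x', hx', hKx'⟩ := hδ x y₀ (by simpa [Metric.mem_closedBall] using hd)
      exact ⟨x', by simpa [Metric.mem_closedBall, dist_comm] using hx',
        by simpa [Metric.mem_closedBall, dist_comm] using hKx'⟩
    choose! z hz1 hz2 using hz
    -- the set T = f ⁻¹' (closedBall y₀ K) is finite with small cardinality
    set FT : Finset X := ((hM y₀).1.toFinset).biUnion (fun y => (hN y).1.toFinset) with hFT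
    have hTsub : f ⁻¹' (closedBall y₀ K) ⊆ ↑FT := by
      intro x hx
      simp only [hFT, Finset.coe_biUnion, Set.mem_iUnion, Finset.mem_coe,
        Set.Finite.mem_toFinset, Set.mem_preimage, Set.mem_singleton_iff]
      exact ⟨f x, hx, rfl⟩
    have hTfin : (f ⁻¹' (closedBall y₀ K)).Finite :=
      Set.Finite.subset (FT.finite_toSet) hTsub
    have hTcard : (f ⁻¹' (closedBall y₀ K)).ncard ≤ M * N + 1 := by
      calc (f ⁻¹' (closedBall y₀ K)).ncard
          ≤ (↑FT : Set X).ncard := Set.ncard_le_ncard hTsub FT.finite_toSet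
        _ = FT.card := Set.ncard_coe_finset FT
        _ ≤ ∑ y ∈ (hM y₀).1.toFinset, ((hN y).1.toFinset).card :=
            Finset.card_biUnion_le
        _ ≤ ∑ _y ∈ (hM y₀).1.toFinset, N := by
            refine Finset.sum_le_sum (fun y _ => ?_)
            rw [← Set.ncard_eq_toFinset_card _ (hN y).1]
            exact (hN y).2
        _ = (hM y₀).1.toFinset.card * N := by rw [Finset.sum_const, smul_eq_mul]
        _ ≤ M * N := by
            apply Nat.mul_le_mul_right
            rw [← Set.ncard_eq_toFinset_card _ (hM y₀).1]
            exact (hM y₀).2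
        _ ≤ M * N + 1 := Nat.le_succ _
    obtain ⟨g, hg⟩ := exists_range_cover x₀ hTfin hTcard
    refine ⟨fun i => closedBall (g i) δ, ?_, ?_⟩
    · intro i
      apply EMetric.diam_le
      intro a ha b hb
      rw [edist_dist]
      apply ENNReal.ofReal_le_ofReal
      calc dist a b ≤ dist a (g i) + dist (g i) b := dist_triangle _ _ _
        _ ≤ δ + δ := add_le_add (Metric.mem_closedBall.mp ha)
            (by rw [dist_comm]; exact Metric.mem_closedBall.mp hb)
        _ = 2 * δ := by ring
    · intro x hx
      have hzT : z x ∈ f ⁻¹' (closedBall y₀ K) := hz2 x hx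
      obtain ⟨i, hi⟩ := hg hzT
      refine Set.mem_iUnion.mpr ⟨i, ?_⟩
      rw [Metric.mem_closedBall, hi]
      exact hz1 x hx
end
end
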